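/- arXiv:2106.02590 — 5 statements merged into one kernel-verified Lean document; each statement's English description precedes it below -/
import Mathlib

section
/- Let G be a nonempty finite set, let Σ : G × G → ℝ satisfy Σ(j,k) ≥ 0 for all j,k ∈ G and Σ(j,j) > 0 for all j ∈ G, and let β : G → ℝ be such that either β(j) ≥ 0 for all j ∈ G or β(j) ≤ 0 for all j ∈ G. Set D = Σ_{k∈G} Σ_{k'∈G} Σ(k,k') and, for j ∈ G, w(j) = (Σ_{k∈G} Σ(j,k)) / D, and define the compressed weight θ = |G| · Σ_{j∈G} w(j) β(j). Then D > 0, and: θ ≠ 0 if and only if there exists j ∈ G with β(j) ≠ 0; moreover, for any j ∈ G with β(j) ≠ 0, θ has the same sign as β(j) (i.e. θ·β(j) > 0). -/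
open Finset

/-- **Compressed model weights (deterministic core of Proposition `weights_compressed`).**
For a nonempty finite group `G` with within-group covariances `S j k ≥ 0`, positive
variances `S j j > 0`, and weights `β` of a common sign, the compressed weight
`θ = |G| ∑ j w j * β j`, with `w j = (∑ k S j k) / D` and `D = ∑ k ∑ k' S k k'`,
satisfies: `D > 0`, `θ ≠ 0` iff some `β j ≠ 0`, and `θ` has the sign of any nonzero `β j`. -/
theorem compressed_weights_sign
    (G : Type*) [Fintype G] [Nonempty G]
    (S : G → G → ℝ) (β : G → ℝ)
    (hS : ∀ j k : G, 0 ≤ S j k)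
    (hSdiag : ∀ j : G, 0 < S j j)
    (hβ : (∀ j : G, 0 ≤ β j) ∨ (∀ j : G, β j ≤ 0))
    (D : ℝ) (hD : D = ∑ k : G, ∑ k' : G, S k k')
    (w : G → ℝ) (hw : ∀ j : G, w j = (∑ k : G, S j k) / D)
    (θ : ℝ) (hθ : θ = (Fintype.card G : ℝ) * ∑ j : G, w j * β j) :
    0 < D ∧ (θ ≠ 0 ↔ ∃ j : G, β j ≠ 0) ∧ (∀ j : G, β j ≠ 0 → 0 < θ * β j) := by
  have hr : ∀ j : G, 0 < ∑ k : G, S j k := fun j =>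
    Finset.sum_pos' (fun k _ => hS j k) ⟨j, mem_univ j, hSdiag j⟩
  have hDpos : 0 < D := by
    rw [hD]
    exact Finset.sum_pos' (fun j _ => (hr j).le)
      ⟨Classical.arbitrary G, mem_univ _, hr _⟩
  set T : ℝ := ∑ j : G, (∑ k : G, S j k) * β j with hT
  have hθ' : θ = ((Fintype.card G : ℝ) / D) * T := by
    rw [hθ, hT]
    rw [Finset.mul_sum, Finset.mul_sum]
    refine Finset.sum_congr rfl fun j _ => ?_
    rw [hw j]
    field_simp
  have hc : 0 < (Fintype.card G : ℝ) / D :=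
    div_pos (by exact_mod_cast Fintype.card_pos) hDpos
  -- sign analysis
  have key : (∀ j : G, β j = 0) ∨ (0 < T ∧ ∀ j : G, 0 ≤ β j ∧ (β j ≠ 0 → 0 < β j))
      ∨ (T < 0 ∧ ∀ j : G, β j ≤ 0 ∧ (β j ≠ 0 → β j < 0)) := by
    by_cases hz : ∀ j : G, β j = 0
    · exact Or.inl hz
    · push_neg at hz
      obtain ⟨j0, hj0⟩ := hz
      rcases hβ with hpos | hneg
      · refine Or.inr (Or.inl ⟨?_, fun j => ⟨hpos j, fun h => lt_of_le_of_ne (hpos j) (Ne.symm h)⟩⟩)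
        refine Finset.sum_pos' (fun j _ => mul_nonneg (hr j).le (hpos j))
          ⟨j0, mem_univ _, mul_pos (hr j0) (lt_of_le_of_ne (hpos j0) (Ne.symm hj0))⟩
      · refine Or.inr (Or.inr ⟨?_, fun j => ⟨hneg j, fun h => lt_of_le_of_ne (hneg j) h⟩⟩)
        have : 0 < ∑ j : G, (∑ k : G, S j k) * (-β j) := by
          refine Finset.sum_pos' (fun j _ => mul_nonneg (hr j).le (neg_nonneg.2 (hneg j)))
            ⟨j0, mem_univ _, mul_pos (hr j0) (neg_pos.2 (lt_of_le_of_ne (hneg j0) hj0))⟩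
        have h2 : (0:ℝ) < -T := by
          rw [hT]
          simpa [Finset.sum_neg_distrib, mul_neg] using this
        linarith
  refine ⟨hDpos, ?_, ?_⟩
  · constructor
    · intro hθne
      by_contra h
      push_neg at h
      apply hθne
      rw [hθ', hT]
      have : ∀ j : G, β j = 0 := fun j => h j
      simp [this]
    · rintro ⟨j, hj⟩ hθ0
      rcases key with hz | ⟨hTpos, _⟩ | ⟨hTneg, _⟩
      · exact hj (hz j)
      · rw [hθ'] at hθ0
        have := mul_pos hc hTpos
        linarith
      · rw [hθ'] at hθ0
        nlinarith
  · intro j hj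
    rcases key with hz | ⟨hTpos, hall⟩ | ⟨hTneg, hall⟩
    · exact absurd (hz j) hj
    · have hβj := (hall j).2 hj
      have : 0 < θ := hθ' ▸ mul_pos hc hTpos
      exact mul_pos this hβj
    · have hβj := (hall j).2 hj
      have : θ < 0 := by rw [hθ']; exact mul_neg_of_pos_of_neg hc hTneg
      exact mul_pos_of_neg_of_neg this hβj
end

section
/- Let (Ω, 𝔽, ℙ) be a probability space, p and B positive integers, N ⊆ Fin p nonempty, and for each b ∈ Fin B let (q̂^{(b)}_j)_{j ∈ Fin p} be measurable real-valued random variables such that for every α ∈ (0,1), ℙ(min_{j ∈ N} q̂^{(b)}_j ≤ α) ≤ α. Fix γ ∈ (0,1) and define the ensembled p-values q̃_j(γ) = min{1, γ-quantile({q̂^{(b)}_j / γ : b ∈ Fin B})} for each j ∈ Fin p. Then for every α ∈ (0,1), ℙ(min_{j ∈ N} q̃_j(γ) ≤ α) ≤ α. -/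
open MeasureTheory
open scoped ENNReal

/-- `empPi v a = (1/B) · #{b : v b ≤ a}`, the empirical fraction of values `≤ a`. -/
noncomputable def empPi {B : ℕ} (v : Fin B → ℝ) (a : ℝ) : ℝ :=
  ((Finset.univ.filter fun b => v b ≤ a).card : ℝ) / (B : ℝ)

/-- Empirical `γ`-quantile of a finite family `v : Fin B → ℝ`:
`γ-quantile(v) = min {v b : (1/B) · #{b' : v b' ≤ v b} ≥ γ}`. -/
noncomputable def gQuantile {B : ℕ} (γ : ℝ) (v : Fin B → ℝ) : ℝ :=
  sInf {x : ℝ | ∃ b : Fin B, v b = x ∧ γ ≤ empPi v x}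

lemma gQuantile_count {B : ℕ} (hB : 0 < B) {γ α : ℝ} (hγ0 : 0 < γ) (hγ1 : γ ≤ 1)
    (v : Fin B → ℝ) (h : gQuantile γ v ≤ α) :
    γ * B ≤ ((Finset.univ.filter fun b => v b ≤ α).card : ℝ) := by
  set S : Set ℝ := {x : ℝ | ∃ b : Fin B, v b = x ∧ γ ≤ empPi v x} with hS
  have hBR : (0 : ℝ) < B := by exact_mod_cast hB
  have hfin : S.Finite :=
    (Set.finite_range v).subset (by rintro x ⟨b, hb, -⟩; exact ⟨b, hb⟩)
  have hne : S.Nonempty := by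
    obtain ⟨b₀, -, hb₀⟩ :=
      Finset.exists_max_image Finset.univ v ⟨⟨0, hB⟩, Finset.mem_univ _⟩
    refine ⟨v b₀, b₀, rfl, ?_⟩
    have hfil : (Finset.univ.filter fun b => v b ≤ v b₀) = Finset.univ := by
      ext b; simp [hb₀ b (Finset.mem_univ b)]
    have : empPi v (v b₀) = 1 := by
      simp [empPi, hfil, Finset.card_univ]
      omega
    linarith
  have hmem : sInf S ∈ S := hne.csInf_mem hfin
  obtain ⟨b, hb, hγq⟩ := hmem
  have hle : sInf S ≤ α := h
  have hsub : (Finset.univ.filter fun b' => v b' ≤ sInf S) ⊆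
      (Finset.univ.filter fun b' => v b' ≤ α) := by
    intro b' hb'
    simp only [Finset.mem_filter, Finset.mem_univ, true_and] at hb' ⊢
    exact hb'.trans hle
  have hcard : ((Finset.univ.filter fun b' => v b' ≤ sInf S).card : ℝ) ≤
      ((Finset.univ.filter fun b' => v b' ≤ α).card : ℝ) := by
    exact_mod_cast Finset.card_le_card hsub
  have : γ ≤ ((Finset.univ.filter fun b' => v b' ≤ sInf S).card : ℝ) / B := hγq
  rw [le_div_iff₀ hBR] at this
  linarith

/-- **Ensembling proposition.**
If each of the `B` p-value families `q b` controls the δ-FWER over the null set `N`, then the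
quantile-aggregated family `q̃ j (γ) = min {1, γ-quantile({q b j / γ : b})}` also controls the
δ-FWER over `N`. -/
theorem ensembling_fwer_control
    {Ω : Type*} [MeasurableSpace Ω] (P : Measure Ω) [IsProbabilityMeasure P]
    (p B : ℕ) (hp : 0 < p) (hB : 0 < B)
    (N : Finset (Fin p)) (hN : N.Nonempty)
    (q : Fin B → Fin p → Ω → ℝ) (hmeas : ∀ b j, Measurable (q b j))
    (hctrl : ∀ b : Fin B, ∀ α ∈ Set.Ioo (0 : ℝ) 1,
      P {ω | N.inf' hN (fun j => q b j ω) ≤ α} ≤ ENNReal.ofReal α)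
    (γ : ℝ) (hγ : γ ∈ Set.Ioo (0 : ℝ) 1)
    (qtilde : Fin p → Ω → ℝ)
    (hqtilde : ∀ j ω, qtilde j ω = min 1 (gQuantile γ (fun b => q b j ω / γ))) :
    ∀ α ∈ Set.Ioo (0 : ℝ) 1,
      P {ω | N.inf' hN (fun j => qtilde j ω) ≤ α} ≤ ENNReal.ofReal α := by
  classical
  intro α hα
  obtain ⟨hγ0, hγ1⟩ := hγ
  obtain ⟨hα0, hα1⟩ := hα
  set c : ℝ := γ * α with hc
  have hcIoo : c ∈ Set.Ioo (0 : ℝ) 1 := by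
    constructor
    · positivity
    · nlinarith
  set A : Fin B → Set Ω := fun b => {ω | N.inf' hN (fun j => q b j ω) ≤ c} with hA
  have hAm : ∀ b, MeasurableSet (A b) := by
    intro b
    have : A b = ⋃ j ∈ N, {ω | q b j ω ≤ c} := by
      ext ω; simp [hA, Finset.inf'_le_iff]
    rw [this]
    exact MeasurableSet.biUnion N.countable_toSet
      (fun j _ => measurableSet_le (hmeas b j) measurable_const)
  set f : Ω → ℝ≥0∞ := fun ω => ∑ b : Fin B, (A b).indicator (fun _ => 1) ω with hf
  have hfm : Measurable f :=
    Finset.measurable_sum _ (fun b _ => measurable_const.indicator (hAm b))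
  have hfcount : ∀ ω, f ω =
      ((Finset.univ.filter fun b => ω ∈ A b).card : ℝ≥0∞) := by
    intro ω
    simp only [hf, Set.indicator_apply]
    rw [Finset.sum_boole]
  set C : ℝ≥0∞ := ENNReal.ofReal (γ * B) with hC
  have hBR : (0 : ℝ) < B := by exact_mod_cast hB
  have hC0 : C ≠ 0 := by
    simp [hC, ENNReal.ofReal_eq_zero]
    positivity
  have hCtop : C ≠ ⊤ := ENNReal.ofReal_ne_top
  -- event inclusion
  have hincl : {ω | N.inf' hN (fun j => qtilde j ω) ≤ α} ⊆ {ω | C ≤ f ω} := by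
    intro ω hω
    simp only [Set.mem_setOf_eq, Finset.inf'_le_iff] at hω
    obtain ⟨j, hjN, hj⟩ := hω
    rw [hqtilde j ω] at hj
    have hg : gQuantile γ (fun b => q b j ω / γ) ≤ α := by
      rcases min_le_iff.mp hj with h1 | h2
      · linarith
      · exact h2
    have hcount := gQuantile_count hB hγ0 hγ1.le _ hg
    have hsub : (Finset.univ.filter fun b => q b j ω / γ ≤ α) ⊆
        (Finset.univ.filter fun b => ω ∈ A b) := by
      intro b hb
      simp only [Finset.mem_filter, Finset.mem_univ, true_and] at hb ⊢
      have hq : q b j ω ≤ c := by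
        rw [div_le_iff₀ hγ0] at hb
        rw [hc]; linarith
      show N.inf' hN (fun j' => q b j' ω) ≤ c
      exact le_trans (Finset.inf'_le (fun j' => q b j' ω) hjN) hq
    have hle2 : (γ * B : ℝ) ≤ ((Finset.univ.filter fun b => ω ∈ A b).card : ℝ) :=
      le_trans hcount (by exact_mod_cast Finset.card_le_card hsub)
    simp only [Set.mem_setOf_eq, hfcount ω, hC]
    calc ENNReal.ofReal (γ * B)
        ≤ ENNReal.ofReal ((Finset.univ.filter fun b => ω ∈ A b).card : ℝ) :=
          ENNReal.ofReal_le_ofReal hle2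
      _ = ((Finset.univ.filter fun b => ω ∈ A b).card : ℝ≥0∞) := by
          rw [ENNReal.ofReal_natCast]
  -- Markov
  have hlint : ∫⁻ ω, f ω ∂P = ∑ b : Fin B, P (A b) := by
    rw [hf]
    rw [lintegral_finset_sum _ (fun b _ => measurable_const.indicator (hAm b))]
    congr 1
    ext b
    rw [lintegral_indicator_const (hAm b), one_mul]
  have hsum : ∑ b : Fin B, P (A b) ≤ (B : ℝ≥0∞) * ENNReal.ofReal c := by
    calc ∑ b : Fin B, P (A b) ≤ ∑ _b : Fin B, ENNReal.ofReal c :=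
          Finset.sum_le_sum (fun b _ => hctrl b c hcIoo)
      _ = (B : ℝ≥0∞) * ENNReal.ofReal c := by
          simp [Finset.sum_const, nsmul_eq_mul]
  have hmarkov : C * P {ω | C ≤ f ω} ≤ ∫⁻ ω, f ω ∂P :=
    mul_meas_ge_le_lintegral₀ hfm.aemeasurable C
  have hchain : C * P {ω | N.inf' hN (fun j => qtilde j ω) ≤ α} ≤ C * ENNReal.ofReal α := by
    calc C * P {ω | N.inf' hN (fun j => qtilde j ω) ≤ α}
        ≤ C * P {ω | C ≤ f ω} := mul_le_mul_right (measure_mono hincl) C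
      _ ≤ ∫⁻ ω, f ω ∂P := hmarkov
      _ = ∑ b : Fin B, P (A b) := hlint
      _ ≤ (B : ℝ≥0∞) * ENNReal.ofReal c := hsum
      _ = C * ENNReal.ofReal α := by
          rw [hC, hc, ← ENNReal.ofReal_natCast B, ← ENNReal.ofReal_mul hBR.le,
            ← ENNReal.ofReal_mul (by positivity)]
          ring_nf
  exact (ENNReal.mul_le_mul_iff_right hC0 hCtop).mp hchain
end

section
/- Let (Ω, 𝔽, ℙ) be a probability space, C, p, B positive integers, and N ⊆ Fin p nonempty. For each b ∈ Fin B let g_b : Fin p → Fin C be a grouping map, N_b ⊆ Fin C a set with g_b(j) ∈ N_b for every j ∈ N, and (p̂^{(b)}_c)_{c ∈ Fin C} measurable nonnegative random variables such that for every c ∈ N_b and every α ∈ (0,1), ℙ(p̂^{(b)}_c ≤ α) ≤ α. Define q̂^{(b)}_j = min{1, C · p̂^{(b)}_{g_b(j)}}, and for γ ∈ (0,1) define the ensembled p-values q̃_j(γ) = min{1, γ-quantile({q̂^{(b)}_j / γ : b ∈ Fin B})}. Then for every α ∈ (0,1), ℙ(min_{j ∈ N} q̃_j(γ) ≤ α)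 ≤ α. -/
open MeasureTheory
open scoped ENNReal

lemma empPi_mono {B : ℕ} (v : Fin B → ℝ) {a a' : ℝ} (h : a ≤ a') :
    empPi v a ≤ empPi v a' := by
  unfold empPi
  refine div_le_div_of_nonneg_right ?_ (Nat.cast_nonneg _)
  exact Nat.cast_le.mpr <| Finset.card_le_card <|
    Finset.monotone_filter_right _ fun b _ hb => le_trans hb h

lemma gQuantile_le_imp {B : ℕ} (hB : 0 < B) {γ α : ℝ} (hγ1 : γ ≤ 1)
    (v : Fin B → ℝ) (h : gQuantile γ v ≤ α) : γ ≤ empPi v α := by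
  haveI : Nonempty (Fin B) := ⟨⟨0, hB⟩⟩
  set S := {x : ℝ | ∃ b : Fin B, v b = x ∧ γ ≤ empPi v x} with hS
  have hfin : S.Finite := Set.Finite.subset (Set.finite_range v)
    (fun x ⟨b, hb, _⟩ => ⟨b, hb⟩)
  have hne : S.Nonempty := by
    obtain ⟨b0, hb0⟩ := Finite.exists_max v
    refine ⟨v b0, b0, rfl, ?_⟩
    have he : (Finset.univ.filter fun b => v b ≤ v b0) = Finset.univ :=
      Finset.filter_true_of_mem fun b _ => hb0 b
    rw [empPi, he, Finset.card_univ, Fintype.card_fin,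
      div_self (by positivity : (B:ℝ) ≠ 0)]
    exact hγ1
  obtain ⟨b, hvb, hγle⟩ := hne.csInf_mem hfin
  have h' : sInf S ≤ α := h
  calc γ ≤ empPi v (sInf S) := hγle
    _ ≤ empPi v α := empPi_mono v h'

/-- **Ensembled clustered inference half of the main theorem: δ-FWER control.**
For each bootstrap `b`, valid nonnegative per-cluster p-values on the null clusters `Nb b`,
Bonferroni-corrected by `C` and de-grouped along `gb b`, are quantile-aggregated over the
bootstraps; the resulting family controls the FWER over any null set `N` whose covariates lie
in null clusters of every bootstrap clustering. -/
theorem ensembled_clustered_inference_delta_fwer_control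
    {Ω : Type*} [MeasurableSpace Ω] (P : Measure Ω) [IsProbabilityMeasure P]
    (C p B : ℕ) (hC : 0 < C) (hp : 0 < p) (hB : 0 < B)
    (N : Finset (Fin p)) (hN : N.Nonempty)
    (gb : Fin B → Fin p → Fin C)
    (Nb : Fin B → Set (Fin C))
    (hsub : ∀ b : Fin B, ∀ j ∈ N, gb b j ∈ Nb b)
    (pb : Fin B → Fin C → Ω → ℝ)
    (hmeas : ∀ b c, Measurable (pb b c))
    (hnonneg : ∀ b c, ∀ ω : Ω, 0 ≤ pb b c ω)
    (hctrl : ∀ b : Fin B, ∀ c ∈ Nb b, ∀ α ∈ Set.Ioo (0 : ℝ) 1,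
      P {ω | pb b c ω ≤ α} ≤ ENNReal.ofReal α)
    (qhat : Fin B → Fin p → Ω → ℝ)
    (hqhat : ∀ b j ω, qhat b j ω = min 1 ((C : ℝ) * pb b (gb b j) ω))
    (γ : ℝ) (hγ : γ ∈ Set.Ioo (0 : ℝ) 1)
    (qtilde : Fin p → Ω → ℝ)
    (hqtilde : ∀ j ω, qtilde j ω = min 1 (gQuantile γ (fun b => qhat b j ω / γ))) :
    ∀ α ∈ Set.Ioo (0 : ℝ) 1,
      P {ω | N.inf' hN (fun j => qtilde j ω) ≤ α} ≤ ENNReal.ofReal α := by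
  intro α hα
  obtain ⟨hα0, hα1⟩ := hα
  obtain ⟨hγ0, hγ1⟩ := hγ
  have hCpos : (0:ℝ) < C := by exact_mod_cast hC
  have hBpos : (0:ℝ) < B := by exact_mod_cast hB
  -- threshold
  set s : ℝ := γ * α with hs
  have hs0 : 0 < s := mul_pos hγ0 hα0
  have hs1 : s < 1 := by
    calc s < 1 * 1 := by
          apply mul_lt_mul' hγ1.le hα1 hα0.le one_pos
      _ = 1 := one_mul 1
  have hsC : s / C ∈ Set.Ioo (0:ℝ) 1 := by
    constructor
    · positivity
    · calc s / C ≤ s / 1 := by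
            apply div_le_div_of_nonneg_left hs0.le one_pos
            exact_mod_cast hC
        _ = s := div_one s
        _ < 1 := hs1
  -- the bad event per bootstrap
  set A : Fin B → Set Ω := fun b => {ω | ∃ j ∈ N, pb b (gb b j) ω ≤ s / C} with hA
  have hAmeas : ∀ b, MeasurableSet (A b) := by
    intro b
    have : A b = ⋃ j ∈ (N : Set (Fin p)), {ω | pb b (gb b j) ω ≤ s / C} := by
      ext ω; simp [hA]
    rw [this]
    exact MeasurableSet.biUnion (Set.to_countable _)
      (fun j _ => (hmeas b (gb b j)) measurableSet_Iic)
  -- per-bootstrap measure bound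
  have hAbound : ∀ b, P (A b) ≤ ENNReal.ofReal s := by
    intro b
    have hsubset : A b ⊆ ⋃ c ∈ (N.image (gb b)), {ω | pb b c ω ≤ s / C} := by
      intro ω ⟨j, hj, hle⟩
      exact Set.mem_biUnion (Finset.mem_image_of_mem _ hj) hle
    calc P (A b) ≤ ∑ c ∈ N.image (gb b), P {ω | pb b c ω ≤ s / C} :=
          le_trans (measure_mono hsubset) (measure_biUnion_finset_le _ _)
      _ ≤ ∑ _c ∈ N.image (gb b), ENNReal.ofReal (s / C) := by
          refine Finset.sum_le_sum fun c hc => ?_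
          obtain ⟨j, hj, rfl⟩ := Finset.mem_image.mp hc
          exact hctrl b _ (hsub b j hj) _ hsC
      _ = ((N.image (gb b)).card : ℝ≥0∞) * ENNReal.ofReal (s / C) := by
          rw [Finset.sum_const, nsmul_eq_mul]
      _ ≤ (C : ℝ≥0∞) * ENNReal.ofReal (s / C) := by
          gcongr
          exact_mod_cast le_trans (Finset.card_le_card (Finset.subset_univ _))
            (le_of_eq (by simp))
      _ = ENNReal.ofReal s := by
          rw [← ENNReal.ofReal_natCast C, ← ENNReal.ofReal_mul (by positivity)]
          congr 1
          field_simp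
  -- counting function
  set f : Ω → ℝ≥0∞ := fun ω => ∑ b : Fin B, (A b).indicator (fun _ => (1:ℝ≥0∞)) ω with hf
  have hfmeas : Measurable f :=
    Finset.measurable_sum _ fun b _ => measurable_const.indicator (hAmeas b)
  have hfint : ∫⁻ ω, f ω ∂P = ∑ b : Fin B, P (A b) := by
    rw [lintegral_finset_sum _ fun b _ => measurable_const.indicator (hAmeas b)]
    exact Finset.sum_congr rfl fun b _ => lintegral_indicator_one (hAmeas b)
  -- pointwise: the FWER event is inside the Markov event
  have hptwise : {ω | N.inf' hN (fun j => qtilde j ω) ≤ α}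
      ⊆ {ω | ENNReal.ofReal (γ * B) ≤ f ω} := by
    intro ω hω
    simp only [Set.mem_setOf_eq] at hω ⊢
    rw [Finset.inf'_le_iff] at hω
    obtain ⟨j, hjN, hj⟩ := hω
    rw [hqtilde] at hj
    have hq : gQuantile γ (fun b => qhat b j ω / γ) ≤ α := by
      rcases min_le_iff.mp hj with h1 | h2
      · linarith
      · exact h2
    have hemp := gQuantile_le_imp hB hγ1.le _ hq
    rw [empPi, le_div_iff₀ hBpos] at hemp
    -- {b : qhat/γ ≤ α} ⊆ {b : ω ∈ A b}
    have hss : (Finset.univ.filter fun b => qhat b j ω / γ ≤ α)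
        ⊆ (Finset.univ.filter fun b => ω ∈ A b) := by
      refine Finset.monotone_filter_right _ fun b _ hb => ?_
      have hq2 : qhat b j ω ≤ s := by
        rw [div_le_iff₀ hγ0] at hb
        rw [hs, mul_comm γ α]; exact hb
      rw [hqhat] at hq2
      have hpb : (C:ℝ) * pb b (gb b j) ω ≤ s := by
        rcases min_le_iff.mp hq2 with h1 | h2
        · linarith
        · exact h2
      exact ⟨j, hjN, by rw [le_div_iff₀ hCpos] at *; linarith [hpb]⟩
    have hcard : γ * B ≤ ((Finset.univ.filter fun b => ω ∈ A b).card : ℝ) :=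
      le_trans hemp (Nat.cast_le.mpr (Finset.card_le_card hss))
    have hfω : f ω = ((Finset.univ.filter fun b => ω ∈ A b).card : ℝ≥0∞) := by
      simp [hf, Set.indicator_apply, Finset.sum_boole]
    rw [hfω, ← ENNReal.ofReal_natCast]
    exact ENNReal.ofReal_le_ofReal hcard
  -- Markov
  have hγB0 : ENNReal.ofReal (γ * B) ≠ 0 := by
    simp [ENNReal.ofReal_eq_zero, not_le, mul_pos hγ0 hBpos]
  have hγBt : ENNReal.ofReal (γ * B) ≠ ⊤ := ENNReal.ofReal_ne_top
  have hmarkov : ENNReal.ofReal (γ * B) * P {ω | ENNReal.ofReal (γ * B) ≤ f ω}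
      ≤ ∫⁻ ω, f ω ∂P := mul_meas_ge_le_lintegral₀ hfmeas.aemeasurable _
  have key : ENNReal.ofReal (γ * B) * P {ω | N.inf' hN (fun j => qtilde j ω) ≤ α}
      ≤ ENNReal.ofReal (γ * B) * ENNReal.ofReal α := by
    calc ENNReal.ofReal (γ * B) * P {ω | N.inf' hN (fun j => qtilde j ω) ≤ α}
        ≤ ENNReal.ofReal (γ * B) * P {ω | ENNReal.ofReal (γ * B) ≤ f ω} :=
          mul_le_mul_right (measure_mono hptwise) _
      _ ≤ ∫⁻ ω, f ω ∂P := hmarkov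
      _ = ∑ b : Fin B, P (A b) := hfint
      _ ≤ ∑ _b : Fin B, ENNReal.ofReal s := Finset.sum_le_sum fun b _ => hAbound b
      _ = (B : ℝ≥0∞) * ENNReal.ofReal s := by rw [Finset.sum_const, nsmul_eq_mul, Finset.card_univ, Fintype.card_fin]
      _ = ENNReal.ofReal (γ * B) * ENNReal.ofReal α := by
          rw [← ENNReal.ofReal_natCast B, ← ENNReal.ofReal_mul (Nat.cast_nonneg B),
            ← ENNReal.ofReal_mul (by positivity)]
          congr 1
          rw [hs]; ring
  exact (ENNReal.mul_le_mul_iff_right hγB0 hγBt).mp key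
end

section
/- Let p, B be positive integers, N ⊆ Fin p nonempty, γ ∈ (0,1), and for each b ∈ Fin B let (q^{(b)}_j)_{j ∈ Fin p} be real numbers. Define q̃_j(γ) = min{1, γ-quantile({q^{(b)}_j / γ : b ∈ Fin B})}. Then min_{j ∈ N} q̃_j(γ) ≥ min{1, γ-quantile({(min_{j ∈ N} q^{(b)}_j) / γ : b ∈ Fin B})}. -/
lemma gQuantile_mono {B : ℕ} (hB : 0 < B) {γ : ℝ} (hγ0 : 0 < γ) (hγ1 : γ ≤ 1)
    {v w : Fin B → ℝ} (hvw : ∀ b, v b ≤ w b) :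
    gQuantile γ v ≤ gQuantile γ w := by
  haveI : NeZero B := ⟨hB.ne'⟩
  have hne : (Finset.univ : Finset (Fin B)).Nonempty := Finset.univ_nonempty
  -- Sw is nonempty
  have hSw : {x : ℝ | ∃ b : Fin B, w b = x ∧ γ ≤ empPi w x}.Nonempty := by
    obtain ⟨b0, hb0mem, hb0⟩ := Finset.exists_mem_eq_sup' hne w
    refine ⟨w b0, b0, rfl, ?_⟩
    have : (Finset.univ.filter fun b => w b ≤ w b0) = Finset.univ := by
      apply Finset.filter_true_of_mem
      intro b _
      rw [← hb0]; exact Finset.le_sup' w (Finset.mem_univ b)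
    rw [empPi, this, Finset.card_univ, Fintype.card_fin]
    rw [div_self (by positivity)]
    exact hγ1
  -- Sv is bounded below
  have hbdd : BddBelow {x : ℝ | ∃ b : Fin B, v b = x ∧ γ ≤ empPi v x} := by
    refine ⟨Finset.univ.inf' hne v, ?_⟩
    rintro x ⟨b, rfl, -⟩
    exact Finset.inf'_le v (Finset.mem_univ b)
  apply le_csInf hSw
  rintro x ⟨b, rfl, hb⟩
  -- the index set of v-values ≤ w b
  set T := Finset.univ.filter (fun b'' => v b'' ≤ w b) with hT
  have hsub : (Finset.univ.filter fun b'' => w b'' ≤ w b) ⊆ T := by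
    intro b'' hb''
    simp only [hT, Finset.mem_filter, Finset.mem_univ, true_and] at *
    exact le_trans (hvw b'') hb''
  have hTne : T.Nonempty := ⟨b, by simp [hT, hvw b]⟩
  obtain ⟨b', hb'mem, hb'⟩ := Finset.exists_mem_eq_sup' hTne v
  have hb'le : v b' ≤ w b := by
    have := hb'mem
    simp only [hT, Finset.mem_filter] at this
    exact this.2
  have hsub2 : T ⊆ Finset.univ.filter fun b'' => v b'' ≤ v b' := by
    intro b'' hb''
    simp only [Finset.mem_filter, Finset.mem_univ, true_and]
    rw [← hb']
    exact Finset.le_sup' v hb''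
  have hkey : γ ≤ empPi v (v b') := by
    refine le_trans hb ?_
    unfold empPi
    have hc : ((Finset.univ.filter fun b'' => w b'' ≤ w b).card : ℝ) ≤
        ((Finset.univ.filter fun b'' => v b'' ≤ v b').card : ℝ) := by
      exact_mod_cast Finset.card_le_card (hsub.trans hsub2)
    exact div_le_div_of_nonneg_right hc (by positivity)
  have : v b' ∈ {x : ℝ | ∃ b : Fin B, v b = x ∧ γ ≤ empPi v x} := ⟨b', rfl, hkey⟩
  exact le_trans (csInf_le hbdd this) hb'le

/-- **Min/quantile exchange inequality.**
The minimum over the null set `N` of the aggregated p-values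
`q̃ j (γ) = min {1, γ-quantile({q b j / γ : b})}` is bounded below by the aggregation of the
per-bootstrap minima. -/
theorem min_quantile_exchange
    (p B : ℕ) (hp : 0 < p) (hB : 0 < B)
    (N : Finset (Fin p)) (hN : N.Nonempty)
    (γ : ℝ) (hγ : γ ∈ Set.Ioo (0 : ℝ) 1)
    (q : Fin B → Fin p → ℝ)
    (qtilde : Fin p → ℝ)
    (hqtilde : ∀ j : Fin p, qtilde j = min 1 (gQuantile γ (fun b => q b j / γ))) :
    min 1 (gQuantile γ (fun b => (N.inf' hN fun j => q b j) / γ)) ≤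
      N.inf' hN (fun j => qtilde j) := by
  haveI : NeZero B := ⟨hB.ne'⟩
  apply Finset.le_inf'
  intro j hj
  rw [hqtilde j]
  apply min_le_min le_rfl
  apply gQuantile_mono hB hγ.1 hγ.2.le
  intro b
  gcongr
  · exact hγ.1.le
  · exact Finset.inf'_le _ hj
end

section
/- Let (Ω, 𝔽, ℙ) be a probability space and Φ the cumulative distribution function of the standard Gaussian distribution N(0,1) on ℝ. Let θ̂ : Ω → ℝ be a measurable random variable, and let n > 0, σ > 0, ω > 0, a ≥ 0 and θ* ∈ ℝ be constants with |θ*| ≤ a·σ·√ω. Define the adjusted p-value p̂ = 2·(1 − Φ(√n · max(|θ̂|/(σ√ω) − a, 0))). Then for every α ∈ (0,1), the event {p̂ ≤ α} is contained in the event {√n·|θ̂ − θ*|/(σ√ω) ≥ Φ⁻¹(1 − α/2)}, and consequently ℙ(p̂ ≤ α) ≤ ℙ(√n·|θ̂ − θ*|/(σ√ω) ≥ Φ⁻¹(1 − α/2)). -/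
open MeasureTheory ProbabilityTheory

/-- **Deterministic core of the adjusted p-value control (correlated clusters).**
With `Φ` the standard Gaussian CDF and `Φ⁻¹` its inverse on `(0,1)`, if `|θ*| ≤ a·σ·√ω`, then
for each `α ∈ (0,1)` the event that the adjusted p-value
`p̂ = 2(1 − Φ(√n · max(|θ̂|/(σ√ω) − a, 0)))` is at most `α` is contained in the event
`√n·|θ̂ − θ*|/(σ√ω) ≥ Φ⁻¹(1 − α/2)`, whence the same inequality for probabilities. -/
theorem adjusted_pvalue_event_inclusion
    {Ω : Type*} [MeasurableSpace Ω] (P : Measure Ω) [IsProbabilityMeasure P]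
    (Φ : ℝ → ℝ)
    (hΦ : ∀ x : ℝ, Φ x = ProbabilityTheory.cdf (gaussianReal 0 1) x)
    (Φinv : ℝ → ℝ)
    (hΦinv_left : ∀ x : ℝ, Φinv (Φ x) = x)
    (hΦinv_right : ∀ y ∈ Set.Ioo (0 : ℝ) 1, Φ (Φinv y) = y)
    (θhat : Ω → ℝ) (hθhat : Measurable θhat)
    (n σ w a : ℝ) (hn : 0 < n) (hσ : 0 < σ) (hw : 0 < w) (ha : 0 ≤ a)
    (θstar : ℝ) (hθstar : |θstar| ≤ a * σ * Real.sqrt w)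
    (phat : Ω → ℝ)
    (hphat : ∀ ω : Ω,
      phat ω = 2 * (1 - Φ (Real.sqrt n * max (|θhat ω| / (σ * Real.sqrt w) - a) 0))) :
    ∀ α ∈ Set.Ioo (0 : ℝ) 1,
      ({ω | phat ω ≤ α} ⊆
        {ω | Φinv (1 - α / 2) ≤ Real.sqrt n * |θhat ω - θstar| / (σ * Real.sqrt w)}) ∧
      P {ω | phat ω ≤ α} ≤
        P {ω | Φinv (1 - α / 2) ≤ Real.sqrt n * |θhat ω - θstar| / (σ * Real.sqrt w)} := by

  intro α hα
  have hΦmono : Monotone Φ := by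
    intro x y hxy
    rw [hΦ x, hΦ y]
    exact (ProbabilityTheory.cdf (gaussianReal 0 1)).mono hxy
  have key : {ω | phat ω ≤ α} ⊆
      {ω | Φinv (1 - α / 2) ≤ Real.sqrt n * |θhat ω - θstar| / (σ * Real.sqrt w)} := by
    intro ω hω
    simp only [Set.mem_setOf_eq] at hω ⊢
    set T := Real.sqrt n * max (|θhat ω| / (σ * Real.sqrt w) - a) 0 with hT
    have h1 : 1 - α / 2 ≤ Φ T := by
      have := hphat ω
      rw [this] at hω
      linarith
    -- T ≥ Φinv (1 - α/2)
    have hc : Φ (Φinv (1 - α / 2)) = 1 - α / 2 :=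
      hΦinv_right _ ⟨by linarith [hα.2], by linarith [hα.1]⟩
    have hTc : Φinv (1 - α / 2) ≤ T := by
      by_contra h
      push_neg at h
      have h2 : Φ T ≤ Φ (Φinv (1 - α / 2)) := hΦmono h.le
      have heq : Φ T = Φ (Φinv (1 - α / 2)) := le_antisymm h2 (by rw [hc]; exact h1)
      have := congrArg Φinv heq
      rw [hΦinv_left, hΦinv_left] at this
      exact absurd this (ne_of_lt h)
    -- T ≤ √n |θ̂-θ*|/(σ√w)
    have hsw : 0 < σ * Real.sqrt w := mul_pos hσ (Real.sqrt_pos.mpr hw)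
    have hsn : 0 ≤ Real.sqrt n := Real.sqrt_nonneg n
    have habs : |θhat ω| - a * (σ * Real.sqrt w) ≤ |θhat ω - θstar| := by
      have := abs_sub_abs_le_abs_sub (θhat ω) θstar
      have h2 : |θstar| ≤ a * (σ * Real.sqrt w) := by rw [← mul_assoc]; exact hθstar
      linarith
    have hnn : (0:ℝ) ≤ |θhat ω - θstar| := abs_nonneg _
    have hmax : max (|θhat ω| / (σ * Real.sqrt w) - a) 0 ≤ |θhat ω - θstar| / (σ * Real.sqrt w) := by
      apply max_le
      · rw [div_sub' (ne_of_gt hsw), div_le_div_iff₀ hsw hsw]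
        nlinarith
      · positivity
    calc Φinv (1 - α / 2) ≤ T := hTc
      _ ≤ Real.sqrt n * (|θhat ω - θstar| / (σ * Real.sqrt w)) := by
          exact mul_le_mul_of_nonneg_left hmax hsn
      _ = Real.sqrt n * |θhat ω - θstar| / (σ * Real.sqrt w) := by ring
  exact ⟨key, measure_mono key⟩
end
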